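/- arXiv:2207.01292 — 2 statements merged into one kernel-verified Lean document; each statement's English description precedes it below -/
import Mathlib

section
/- Let c(s) = (x(s), y(s), θ(s)) with x(s) = x₀ + b·cos θ₀ - b·cos(s+θ₀), y(s) = y₀ + b·sin θ₀ - b·sin(s+θ₀), θ(s) = s + θ₀, and define γ_s(t) = (t, x(s) + t·cos θ(s), y(s) + t·sin θ(s)). Then for every s, lim_{t → b} γ_s(t) = (b, x₀ + b·cos θ₀, y₀ + b·sin θ₀); in fact γ_s(b) is independent of s. -/
/-- The family of null geodesics `γ_s` determined by an integral curve of `⊕` in the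
Minkowski block all focus at the common point `(b, x₀ + b cos θ₀, y₀ + b sin θ₀)` as
`t → b⁻`; in fact `γ_s(b)` is independent of `s`. -/
theorem sky_at_infinity_focus (b x₀ y₀ θ₀ : ℝ)
    (x y θ : ℝ → ℝ)
    (hx : ∀ s, x s = x₀ + b * Real.cos θ₀ - b * Real.cos (s + θ₀))
    (hy : ∀ s, y s = y₀ + b * Real.sin θ₀ - b * Real.sin (s + θ₀))
    (hθ : ∀ s, θ s = s + θ₀)
    (γ : ℝ → ℝ → ℝ × ℝ × ℝ)
    (hγ : ∀ s t, γ s t = (t, x s + t * Real.cos (θ s), y s + t * Real.sin (θ s))) :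
    (∀ s : ℝ, Filter.Tendsto (γ s) (nhdsWithin b (Set.Iio b))
      (nhds (b, x₀ + b * Real.cos θ₀, y₀ + b * Real.sin θ₀))) ∧
    ∀ s₁ s₂ : ℝ, γ s₁ b = γ s₂ b := by
  have key : ∀ s, γ s b = (b, x₀ + b * Real.cos θ₀, y₀ + b * Real.sin θ₀) := by
    intro s
    rw [hγ, hx, hy, hθ]
    ring_nf
  constructor
  · intro s
    have hcont : Continuous (γ s) := by
      have : γ s = fun t => (t, x s + t * Real.cos (θ s), y s + t * Real.sin (θ s)) := by
        funext t; exact hγ s t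
      rw [this]; fun_prop
    have := hcont.continuousAt (x := b)
    rw [ContinuousAt, key s] at this
    exact this.mono_left nhdsWithin_le_nhds
  · intro s₁ s₂; rw [key s₁, key s₂]
end

section
/- In Minkowski ℝ³, for a point p ≪-below a null hyperplane: (t,x,y) satisfies t < cos θ·(x-x₀) + sin θ·(y-y₀) if and only if (t,x,y) lies in the chronological past of some point on the null geodesic τ ↦ (τ, x₀ + τ cos θ, y₀ + τ sin θ). -/
/-- Chronological relation in 3-dimensional Minkowski space: `p ≪ q` iff `q - p` is
future-directed timelike. -/
def chron (p q : ℝ × ℝ × ℝ) : Prop :=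
  0 < q.1 - p.1 ∧ (q.2.1 - p.2.1) ^ 2 + (q.2.2 - p.2.2) ^ 2 < (q.1 - p.1) ^ 2

/-!
Write `p = (t, x₀ + a, y₀ + b)` and `u = (c, s)` for the unit direction of the null line.
Because the line is null, the `τ²` terms cancel in the timelike condition `p ≪ γ(τ)`, which
becomes the affine inequality `a² + b² - t² < 2 τ (⟪u, (a, b)⟫ - t)` together with `t < τ`.
If `⟪u, (a, b)⟫ > t` this holds for all large `τ`. Conversely, if `⟪u, (a, b)⟫ ≤ t`, the right
side is at most its value at `τ = t`, and the inequality would give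
`(⟪u, (a, b)⟫ - t)² < ⟪u, (a, b)⟫² - a² - b² ≤ 0` by Cauchy–Schwarz.
-/

section NullLine

variable {c s : ℝ}

theorem mul_add_mul_sq_le_sq_add_sq (hcs : c ^ 2 + s ^ 2 = 1) (a b : ℝ) :
    (c * a + s * b) ^ 2 ≤ a ^ 2 + b ^ 2 := by
  nlinarith [sq_nonneg (s * a - c * b)]

theorem chron_null_line_iff (hcs : c ^ 2 + s ^ 2 = 1) (x₀ y₀ τ : ℝ) (p : ℝ × ℝ × ℝ) :
    chron p (τ, x₀ + τ * c, y₀ + τ * s) ↔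
      p.1 < τ ∧ (p.2.1 - x₀) ^ 2 + (p.2.2 - y₀) ^ 2 - p.1 ^ 2 <
        2 * τ * (c * (p.2.1 - x₀) + s * (p.2.2 - y₀) - p.1) := by
  have null_cancel :
      (x₀ + τ * c - p.2.1) ^ 2 + (y₀ + τ * s - p.2.2) ^ 2 - (τ - p.1) ^ 2 =
        (p.2.1 - x₀) ^ 2 + (p.2.2 - y₀) ^ 2 - p.1 ^ 2 -
          2 * τ * (c * (p.2.1 - x₀) + s * (p.2.2 - y₀) - p.1) := by
    linear_combination τ ^ 2 * hcs
  unfold chron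
  constructor <;> rintro ⟨h₁, h₂⟩ <;> exact ⟨by linarith, by linarith⟩

theorem exists_chron_null_line_of_lt (hcs : c ^ 2 + s ^ 2 = 1) {x₀ y₀ : ℝ}
    {p : ℝ × ℝ × ℝ} (h : p.1 < c * (p.2.1 - x₀) + s * (p.2.2 - y₀)) :
    ∃ τ : ℝ, chron p (τ, x₀ + τ * c, y₀ + τ * s) := by
  simp only [chron_null_line_iff hcs]
  have hd : 0 < 2 * (c * (p.2.1 - x₀) + s * (p.2.2 - y₀) - p.1) := by linarith
  obtain ⟨τ, hτ, hK⟩ := ((Filter.eventually_gt_atTop p.1).and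
    ((Filter.tendsto_id.atTop_mul_const hd).eventually_gt_atTop
      ((p.2.1 - x₀) ^ 2 + (p.2.2 - y₀) ^ 2 - p.1 ^ 2))).exists
  exact ⟨τ, hτ, by rw [id] at hK; linarith⟩

theorem lt_of_chron_null_line (hcs : c ^ 2 + s ^ 2 = 1) {x₀ y₀ τ : ℝ} {p : ℝ × ℝ × ℝ}
    (h : chron p (τ, x₀ + τ * c, y₀ + τ * s)) :
    p.1 < c * (p.2.1 - x₀) + s * (p.2.2 - y₀) := by
  obtain ⟨hτ, hK⟩ := (chron_null_line_iff hcs x₀ y₀ τ p).1 h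
  set m := c * (p.2.1 - x₀) + s * (p.2.2 - y₀)
  by_contra! hm
  have cauchy_schwarz := mul_add_mul_sq_le_sq_add_sq hcs (p.2.1 - x₀) (p.2.2 - y₀)
  have at_t : 2 * τ * (m - p.1) ≤ 2 * p.1 * (m - p.1) := by nlinarith
  nlinarith [sq_nonneg (m - p.1)]

end NullLine

/-- A point `(t,x,y)` of `ℝ³` satisfies `t < cos θ (x-x₀) + sin θ (y-y₀)` iff it lies in
the chronological past of some point of the null geodesic
`τ ↦ (τ, x₀ + τ cos θ, y₀ + τ sin θ)`. -/
theorem past_of_null_geodesic_halfspace (x₀ y₀ θ : ℝ) (p : ℝ × ℝ × ℝ) :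
    p.1 < Real.cos θ * (p.2.1 - x₀) + Real.sin θ * (p.2.2 - y₀) ↔
    ∃ τ : ℝ, chron p (τ, x₀ + τ * Real.cos θ, y₀ + τ * Real.sin θ) := by
  have hcs := Real.cos_sq_add_sin_sq θ
  exact ⟨exists_chron_null_line_of_lt hcs, fun ⟨_, h⟩ => lt_of_chron_null_line hcs h⟩
end
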